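/- Any monotone word p ∈ [m]^n with p · Δ = Δ + n must remove the n-generators of Δ in increasing order: if a_0 < a_1 < ... < a_{n-1} are the n-generators of Δ, then the element removed at step i is a_i. -/

import Mathlib

/-- The shift of a set of integers: `Δ + k`. -/
def shiftSet (Δ : Set ℤ) (k : ℤ) : Set ℤ := (· + k) '' Δ

/-- `Δ` is `k`-invariant if `Δ + k ⊆ Δ`. -/
def Invariant (k : ℤ) (Δ : Set ℤ) : Prop := shiftSet Δ k ⊆ Δ

/-- `Δ` is bounded (has a minimum element). -/
def HasMin (Δ : Set ℤ) : Prop := ∃ a ∈ Δ, ∀ x ∈ Δ, a ≤ x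

/-- `Δ` is co-bounded: contains all sufficiently large integers. -/
def CoBounded (Δ : Set ℤ) : Prop := ∃ N : ℤ, ∀ x : ℤ, N ≤ x → x ∈ Δ

/-- The `k`-generators of `Δ`: elements `a ∈ Δ` with `a - k ∉ Δ`, i.e. `Δ \ (Δ + k)`. -/
def gens (k : ℤ) (Δ : Set ℤ) : Set ℤ := Δ \ shiftSet Δ k

/-- The `(j+1)`-st smallest element of a set of integers. -/
noncomputable def nthSmallest : ℕ → Set ℤ → ℤ
  | 0, S => sInf S
  | j+1, S => nthSmallest j (S \ {sInf S})

/-- The letter `j ∈ [m]` acts on an `m`-invariant set by removing its `(j+1)`-st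
smallest `m`-generator. -/
noncomputable def letterAct (m : ℤ) (j : ℕ) (Δ : Set ℤ) : Set ℤ :=
  Δ \ {nthSmallest j (gens m Δ)}

/-- `steps m p Δ i = p_{i-1} ⋯ p_1 p_0 ⋅ Δ`: the word acts one letter at a
time, the letter `p 0` (rightmost) acting first. -/
noncomputable def steps (m : ℤ) (p : ℕ → ℕ) (Δ : Set ℤ) : ℕ → Set ℤ
  | 0 => Δ
  | i+1 => letterAct m (p i) (steps m p Δ i)

/-! Write `r_i` for the element removed by the letter `p_i`. Removing `r_i` leaves the
`m`-generators below `r_i` unchanged (the only new generator is `r_i + m`), so the generators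
`≤ r_i` afterwards are exactly the `p_i` generators `< r_i` before. As `p_{i+1} ≥ p_i`, the
`(p_{i+1}+1)`-st generator afterwards must exceed `r_i`: the removed elements increase. Since
`p ⋅ Δ = Δ + n`, they are exactly the `n`-generators `Δ \ (Δ + n)`, and two increasing
enumerations of the same finite set coincide. -/

open Set

lemma nthSmallest_mem_and_ncard_inter_Iio {S : Set ℤ} {j : ℕ} (hS : S.Finite)
    (hj : j < S.ncard) :
    nthSmallest j S ∈ S ∧ (S ∩ Iio (nthSmallest j S)).ncard = j := by
  induction j generalizing S with
  | zero =>
    have hmin : sInf S ∈ S := (nonempty_of_ncard_ne_zero (by omega)).csInf_mem hS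
    have hempty : S ∩ Iio (sInf S) = ∅ :=
      eq_empty_of_forall_notMem fun x hx => not_le.2 hx.2 (csInf_le hS.bddBelow hx.1)
    simp only [nthSmallest, hmin, hempty, ncard_empty, and_self]
  | succ j ih =>
    have hmin : sInf S ∈ S := (nonempty_of_ncard_ne_zero (by omega)).csInf_mem hS
    have hcard := ncard_sdiff_singleton_add_one hmin hS
    obtain ⟨⟨hxS, hxne⟩, hcount⟩ := ih (S := S \ {sInf S}) hS.sdiff (by omega)
    set x := nthSmallest j (S \ {sInf S})
    change x ∈ S ∧ (S ∩ Iio x).ncard = j + 1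
    have hlt : sInf S < x := (csInf_le hS.bddBelow hxS).lt_of_ne' hxne
    rw [← inter_sdiff_right_comm] at hcount
    have := ncard_sdiff_singleton_add_one (s := S ∩ Iio x) ⟨hmin, hlt⟩ (hS.inter_of_left _)
    exact ⟨hxS, by omega⟩

lemma ncard_inter_Iic_nthSmallest {S : Set ℤ} {j : ℕ} (hS : S.Finite) (hj : j < S.ncard) :
    (S ∩ Iic (nthSmallest j S)).ncard = j + 1 := by
  obtain ⟨hmem, hcount⟩ := nthSmallest_mem_and_ncard_inter_Iio hS hj
  rw [← Iio_insert, inter_insert_of_mem hmem,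
    ncard_insert_of_notMem (by simp) (hS.inter_of_left _), hcount]

lemma mem_shiftSet {S : Set ℤ} {k x : ℤ} : x ∈ shiftSet S k ↔ x - k ∈ S := by
  simp [shiftSet, sub_eq_add_neg]

lemma mem_gens {S : Set ℤ} {k x : ℤ} : x ∈ gens k S ↔ x ∈ S ∧ x - k ∉ S := by
  rw [gens, mem_sdiff, mem_shiftSet]

lemma CoBounded.diff_singleton {S : Set ℤ} (hS : CoBounded S) (r : ℤ) :
    CoBounded (S \ {r}) := by
  obtain ⟨N, hN⟩ := hS
  exact ⟨max N (r + 1), fun x hx => ⟨hN x (le_of_max_le_left hx),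
    fun h => by simp only [mem_singleton_iff] at h; omega⟩⟩

section Generators

variable {S : Set ℤ}

lemma gens_finite (k : ℤ) (hb : BddBelow S) (hc : CoBounded S) : (gens k S).Finite := by
  obtain ⟨a, ha⟩ := hb
  obtain ⟨N, hN⟩ := hc
  refine (finite_Ico a (N + k)).subset fun x hx => ⟨ha (mem_gens.1 hx).1, ?_⟩
  by_contra! h
  exact (mem_gens.1 hx).2 (hN _ (by omega))

/-- The least element of `S` in each residue class mod `m` is an `m`-generator. -/
lemma le_ncard_gens (m : ℕ) (hb : BddBelow S) (hc : CoBounded S) :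
    m ≤ (gens m S).ncard := by
  have hres : Iio m ⊆ (fun x : ℤ => (x % m).toNat) '' gens m S := by
    intro r (hr : r < m)
    set T := {x ∈ S | x % m = r}
    obtain ⟨N, hN⟩ := hc
    have hT : T.Nonempty := by
      refine ⟨r + m * N.natAbs, hN _ (by nlinarith [Int.le_natAbs (a := N)]), ?_⟩
      rw [Int.add_mul_emod_self_left, Int.emod_eq_of_lt (by omega) (by omega)]
    have hTb : BddBelow T := hb.mono (sep_subset _ _)
    obtain ⟨hminS, hminr⟩ := Int.csInf_mem hT hTb
    refine ⟨sInf T, mem_gens.2 ⟨hminS, fun h => ?_⟩, by simp [hminr]⟩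
    have : sInf T ≤ sInf T - m := csInf_le hTb ⟨h, by rw [Int.sub_emod_right, hminr]⟩
    omega
  calc m = (Iio m).ncard := (ncard_Iio_nat m).symm
    _ ≤ ((fun x : ℤ => (x % m).toNat) '' gens m S).ncard :=
      ncard_le_ncard hres ((gens_finite _ hb hc).image _)
    _ ≤ (gens m S).ncard := ncard_image_le (gens_finite _ hb hc)

lemma gens_diff_singleton_inter_Iic {k : ℤ} (hk : 0 ≤ k) (r : ℤ) :
    gens k (S \ {r}) ∩ Iic r = gens k S ∩ Iio r := by
  ext x
  simp only [mem_inter_iff, mem_gens, mem_sdiff, mem_singleton_iff, mem_Iic, mem_Iio]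
  constructor
  · rintro ⟨⟨⟨hxS, hxr⟩, hgen⟩, hle⟩
    exact ⟨⟨hxS, fun h => hgen ⟨h, by omega⟩⟩, lt_of_le_of_ne hle hxr⟩
  · rintro ⟨⟨hxS, hgen⟩, hlt⟩
    exact ⟨⟨⟨hxS, hlt.ne⟩, fun h => hgen h.1⟩, hlt.le⟩

lemma nthSmallest_gens_lt_nthSmallest_gens_diff {m j j' : ℕ} (hb : BddBelow S)
    (hc : CoBounded S) (hjj' : j ≤ j') (hj' : j' < m) :
    nthSmallest j (gens m S) < nthSmallest j' (gens m (S \ {nthSmallest j (gens m S)})) := by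
  set r := nthSmallest j (gens m S)
  have hfin := gens_finite m hb hc
  have hfin' := gens_finite m (hb.mono sdiff_subset) (hc.diff_singleton r)
  have hcount : (gens m S ∩ Iio r).ncard = j :=
    (nthSmallest_mem_and_ncard_inter_Iio hfin (by linarith [le_ncard_gens m hb hc])).2
  have hcount' := ncard_inter_Iic_nthSmallest (j := j') hfin'
    (by have := le_ncard_gens m (hb.mono sdiff_subset) (hc.diff_singleton r); omega)
  by_contra! hle
  have hsub : gens m (S \ {r}) ∩ Iic (nthSmallest j' (gens m (S \ {r}))) ⊆ gens m S ∩ Iio r :=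
    gens_diff_singleton_inter_Iic (Int.natCast_nonneg m) r ▸
      inter_subset_inter_right _ (Iic_subset_Iic.2 hle)
  have := ncard_le_ncard hsub (hfin.inter_of_left _)
  omega

end Generators

noncomputable def removed (m : ℕ) (p : ℕ → ℕ) (Δ : Set ℤ) (i : ℕ) : ℤ :=
  nthSmallest (p i) (gens m (steps m p Δ i))

section Steps

variable {m : ℕ} {p : ℕ → ℕ} {Δ : Set ℤ}

lemma steps_succ (i : ℕ) : steps m p Δ (i + 1) = steps m p Δ i \ {removed m p Δ i} := rfl

lemma steps_eq_diff_image (k : ℕ) : steps m p Δ k = Δ \ removed m p Δ '' Iio k := by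
  induction k with
  | zero => simp [steps]
  | succ k ih =>
    rw [steps_succ, ih, sdiff_sdiff, ← Order.succ_eq_add_one, Order.Iio_succ_eq_insert,
      image_insert_eq, union_singleton]

lemma bddBelow_steps (hb : BddBelow Δ) (i : ℕ) : BddBelow (steps m p Δ i) :=
  hb.mono ((steps_eq_diff_image i).subset.trans sdiff_subset)

lemma coBounded_steps (hc : CoBounded Δ) (i : ℕ) : CoBounded (steps m p Δ i) := by
  induction i with
  | zero => exact hc
  | succ i ih => exact ih.diff_singleton _

lemma removed_mem_steps (hb : BddBelow Δ) (hc : CoBounded Δ) {i : ℕ} (hi : p i < m) :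
    removed m p Δ i ∈ steps m p Δ i := by
  have hb' := bddBelow_steps (m := m) (p := p) hb i
  have hc' := coBounded_steps (m := m) (p := p) hc i
  have hgen := (nthSmallest_mem_and_ncard_inter_Iio (gens_finite _ hb' hc')
    (hi.trans_le (le_ncard_gens m hb' hc'))).1
  exact (mem_gens.1 hgen).1

lemma removed_lt_removed_succ (hb : BddBelow Δ) (hc : CoBounded Δ) {i : ℕ}
    (hpi : p i ≤ p (i + 1)) (hpi' : p (i + 1) < m) :
    removed m p Δ i < removed m p Δ (i + 1) :=
  nthSmallest_gens_lt_nthSmallest_gens_diff (bddBelow_steps hb i) (coBounded_steps hc i)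
    hpi hpi'

end Steps

theorem monotone_removes_in_order_general (m n : ℕ) (Δ : Set ℤ)
    (hb : HasMin Δ) (hc : CoBounded Δ)
    (p : ℕ → ℕ) (hp : ∀ i < n, p i < m)
    (hmono : ∀ i j : ℕ, i ≤ j → j < n → p i ≤ p j)
    (hact : steps m p Δ n = shiftSet Δ n)
    (a : Fin n → ℤ) (ha : StrictMono a) (hrange : Set.range a = gens n Δ) :
    ∀ i : Fin n, steps m p Δ i \ steps m p Δ (i + 1) = {a i} := by
  obtain ⟨a₀, -, ha₀⟩ := hb
  have hbdd : BddBelow Δ := ⟨a₀, ha₀⟩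
  have hmem (i : Fin n) : removed m p Δ i ∈ steps m p Δ i := removed_mem_steps hbdd hc (hp i i.2)
  have hmonoOn : StrictMonoOn (removed m p Δ) (Iio n) :=
    strictMonoOn_of_lt_succ ordConnected_Iio fun i _ _ (hi : i + 1 < n) =>
      removed_lt_removed_succ hbdd hc (hmono i (i + 1) i.le_succ hi) (hp _ hi)
  have hsub : removed m p Δ '' Iio n ⊆ Δ := by
    rintro _ ⟨i, hi, rfl⟩
    exact (steps_eq_diff_image i).subset (hmem ⟨i, hi⟩) |>.1
  have hrange' : range a = range fun i : Fin n => removed m p Δ i := by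
    rw [hrange, gens, ← hact, steps_eq_diff_image, sdiff_sdiff_cancel_left hsub, ← Fin.range_val,
      ← range_comp]
    rfl
  have ha' := (ha.range_inj fun i j hij => hmonoOn i.2 j.2 hij).1 hrange'
  intro i
  rw [steps_succ, ha']
  exact sdiff_sdiff_cancel_left (singleton_subset_iff.2 (hmem i))

/-- A monotone word `p` with `p ⋅ Δ = Δ + n` removes the `n`-generators
`a_0 < a_1 < … < a_{n-1}` of `Δ` in increasing order: the element removed at
step `i` is `a_i`. -/
theorem monotone_removes_in_order (m n : ℕ) (hm : 0 < m) (hn : 0 < n) (Δ : Set ℤ)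
    (hIm : Invariant m Δ) (hIn : Invariant n Δ) (hb : HasMin Δ) (hc : CoBounded Δ)
    (p : ℕ → ℕ) (hp : ∀ i < n, p i < m)
    (hmono : ∀ i j : ℕ, i ≤ j → j < n → p i ≤ p j)
    (hact : steps m p Δ n = shiftSet Δ n)
    (a : Fin n → ℤ) (ha : StrictMono a) (hrange : Set.range a = gens n Δ) :
    ∀ i : Fin n, steps m p Δ i \ steps m p Δ (i + 1) = {a i} :=
  monotone_removes_in_order_general m n Δ hb hc p hp hmono hact a ha hrange
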